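/- arXiv:2506.18948 — 4 statements merged into one kernel-verified Lean document; each statement's English description precedes it below -/
import Mathlib

section
/- Let ν ∈ (0,1), let 0 = t_0 < t_1 < ⋯ < t_N = T be an arbitrary mesh with steps τ_k = t_k − t_{k−1}, and define the L1 coefficients A^{(n)}_{n−k} = (1/τ_k) ∫_{t_{k−1}}^{t_k} (t_n − s)^{−ν}/Γ(1−ν) ds for 1 ≤ k ≤ n ≤ N. Then for every sequence V^0, V^1, …, V^N in a real inner product space and every 1 ≤ n ≤ N, ⟨∑_{k=1}^n A^{(n)}_{n−k}(V^k − V^{k−1}), V^n⟩ ≥ (1/2) ∑_{k=1}^n A^{(n)}_{n−k}(‖V^k‖² − ‖V^{k−1}‖²). -/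
open MeasureTheory
open scoped RealInnerProductSpace

/-- The L1 coefficients `A^{(n)}_{n-k} = (1/τ_k) ∫_{t_{k-1}}^{t_k} (t_n - s)^{-ν}/Γ(1-ν) ds`. -/
noncomputable def L1coeff (ν : ℝ) (t : ℕ → ℝ) (n k : ℕ) : ℝ :=
  (t k - t (k - 1))⁻¹ * ∫ s in (t (k - 1))..(t k), (t n - s) ^ (-ν) / Real.Gamma (1 - ν)

/-!
Polarization gives `2⟪V k - V (k-1), V n⟫ = (‖V k‖² - ‖V (k-1)‖²) + (c (k-1) - c k)` with
`c j = ‖V n - V j‖²`, so the defect of the inequality is `½ ∑ A_k (c (k-1) - c k)`. Since `c ≥ 0`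
and `c n = 0`, summation by parts shows this is nonnegative as soon as the weights `A_k` are
nonnegative and nondecreasing in `k`. For the L1 weights this holds because the kernel
`s ↦ (t n - s)^(-ν)` is decreasing: its mean over `[t (k-1), t k]` is at most its value at `t k`,
which is at most its mean over `[t k, t (k+1)]`.
-/

theorem two_mul_real_inner_sub_left {H : Type*} [NormedAddCommGroup H] [InnerProductSpace ℝ H]
    (x y z : H) :
    2 * ⟪x - y, z⟫ = (‖x‖ ^ 2 - ‖y‖ ^ 2) + (‖z - y‖ ^ 2 - ‖z - x‖ ^ 2) := by
  rw [inner_sub_left, norm_sub_sq_real, norm_sub_sq_real, real_inner_comm z x,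
    real_inner_comm z y]
  ring

theorem sum_Icc_mul_sub_nonneg {a c : ℕ → ℝ} {n : ℕ} (ha : ∀ k ∈ Set.Icc 1 n, 0 ≤ a k)
    (ha_mono : MonotoneOn a (Set.Icc 1 n)) (hc : ∀ k, 0 ≤ c k) (hcn : c n = 0) :
    0 ≤ ∑ k ∈ Finset.Icc 1 n, a k * (c (k - 1) - c k) := by
  obtain rfl | hn := n.eq_zero_or_pos
  · simp
  have partial_sum : ∀ m, 1 ≤ m → m ≤ n →
      0 ≤ ∑ k ∈ Finset.Icc 1 m, a k * (c (k - 1) - c k) + a m * c m := by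
    intro m hm
    induction m, hm using Nat.le_induction with
    | base =>
      intro _
      simp only [Finset.Icc_self, Finset.sum_singleton]
      nlinarith [ha 1 ⟨le_rfl, hn⟩, hc 0]
    | succ m hm ih =>
      intro hmn
      have hstep : a m ≤ a (m + 1) :=
        ha_mono ⟨hm, by omega⟩ ⟨by omega, hmn⟩ (Nat.le_succ m)
      rw [Finset.sum_Icc_succ_top (by omega), Nat.add_sub_cancel]
      nlinarith [ih (by omega), hc m]
  simpa [hcn] using partial_sum n hn le_rfl

theorem half_sum_mul_sub_norm_sq_le_inner_sum_smul {H : Type*} [NormedAddCommGroup H]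
    [InnerProductSpace ℝ H] {a : ℕ → ℝ} {n : ℕ} (ha : ∀ k ∈ Set.Icc 1 n, 0 ≤ a k)
    (ha_mono : MonotoneOn a (Set.Icc 1 n)) (V : ℕ → H) :
    (1 / 2) * ∑ k ∈ Finset.Icc 1 n, a k * (‖V k‖ ^ 2 - ‖V (k - 1)‖ ^ 2)
      ≤ ⟪∑ k ∈ Finset.Icc 1 n, a k • (V k - V (k - 1)), V n⟫ := by
  have hdefect := sum_Icc_mul_sub_nonneg ha ha_mono (c := fun j => ‖V n - V j‖ ^ 2)
    (fun _ => by positivity) (by simp)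
  have hexpand : 2 * ⟪∑ k ∈ Finset.Icc 1 n, a k • (V k - V (k - 1)), V n⟫
      = ∑ k ∈ Finset.Icc 1 n, a k * (‖V k‖ ^ 2 - ‖V (k - 1)‖ ^ 2)
        + ∑ k ∈ Finset.Icc 1 n, a k * (‖V n - V (k - 1)‖ ^ 2 - ‖V n - V k‖ ^ 2) := by
    simp only [sum_inner, real_inner_smul_left, Finset.mul_sum, ← Finset.sum_add_distrib]
    refine Finset.sum_congr rfl fun k _ => ?_
    rw [mul_left_comm, two_mul_real_inner_sub_left]
    ring
  linarith

section Kernel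

variable {ν : ℝ}

theorem intervalIntegrable_sub_rpow_neg (hν1 : ν < 1) (b p q : ℝ) :
    IntervalIntegrable (fun s => (b - s) ^ (-ν)) volume p q := by
  simpa using (intervalIntegral.intervalIntegrable_rpow' (r := -ν) (by linarith)
    (a := b - p) (b := b - q)).comp_sub_left b

theorem integral_sub_rpow_neg_le (hν0 : 0 ≤ ν) (hν1 : ν < 1) {b p q : ℝ} (hpq : p ≤ q)
    (hqb : q < b) : ∫ s in p..q, (b - s) ^ (-ν) ≤ (q - p) * (b - q) ^ (-ν) := by
  have h := intervalIntegral.integral_mono_on hpq (intervalIntegrable_sub_rpow_neg hν1 b p q)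
    intervalIntegrable_const (g := fun _ => (b - q) ^ (-ν)) fun s hs =>
      Real.rpow_le_rpow_of_nonpos (by linarith) (by linarith [hs.2]) (by linarith)
  simpa using h

theorem le_integral_sub_rpow_neg (hν0 : 0 ≤ ν) (hν1 : ν < 1) {b p q : ℝ} (hpq : p ≤ q)
    (hqb : q ≤ b) : (q - p) * (b - p) ^ (-ν) ≤ ∫ s in p..q, (b - s) ^ (-ν) := by
  -- the endpoint `s = b`, where `0 ^ (-ν) = 0`, is a null set
  have hne : ∀ᵐ s ∂volume, s ≠ b := by simp [ae_iff]
  have h := intervalIntegral.integral_mono_ae_restrict hpq intervalIntegrable_const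
    (intervalIntegrable_sub_rpow_neg hν1 b p q) (g := fun s => (b - s) ^ (-ν))
    (f := fun _ => (b - p) ^ (-ν)) <| by
      filter_upwards [ae_restrict_of_ae hne, ae_restrict_mem measurableSet_Icc] with s hsb hs
      exact Real.rpow_le_rpow_of_nonpos (by linarith [lt_of_le_of_ne (hs.2.trans hqb) hsb])
        (by linarith [hs.1]) (by linarith)
  simpa using h

end Kernel

section L1coeff

variable {ν : ℝ} {t : ℕ → ℝ} {n k : ℕ}

theorem L1coeff_eq :
    L1coeff ν t n k = (t k - t (k - 1))⁻¹ * (∫ s in (t (k - 1))..(t k), (t n - s) ^ (-ν))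
      / Real.Gamma (1 - ν) := by
  rw [L1coeff, intervalIntegral.integral_div, mul_div_assoc]

theorem L1coeff_le (hν0 : 0 ≤ ν) (hν1 : ν < 1) (hk : t (k - 1) < t k) (hkn : t k < t n) :
    L1coeff ν t n k ≤ (t n - t k) ^ (-ν) / Real.Gamma (1 - ν) := by
  rw [L1coeff_eq]
  gcongr
  rw [inv_mul_le_iff₀ (sub_pos.2 hk)]
  exact integral_sub_rpow_neg_le hν0 hν1 hk.le hkn

theorem le_L1coeff (hν0 : 0 ≤ ν) (hν1 : ν < 1) (hk : t (k - 1) < t k) (hkn : t k ≤ t n) :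
    (t n - t (k - 1)) ^ (-ν) / Real.Gamma (1 - ν) ≤ L1coeff ν t n k := by
  rw [L1coeff_eq]
  gcongr
  rw [le_inv_mul_iff₀ (sub_pos.2 hk)]
  exact le_integral_sub_rpow_neg hν0 hν1 hk.le hkn

theorem sub_one_lt_of_strictMonoOn (ht : StrictMonoOn t (Set.Iic n)) (hk : k ∈ Set.Icc 1 n) :
    t (k - 1) < t k := by
  obtain ⟨hk1, hkn⟩ := hk
  exact ht (Set.mem_Iic.2 (by omega)) hkn (by omega)

theorem L1coeff_nonneg (hν0 : 0 ≤ ν) (hν1 : ν < 1) (ht : StrictMonoOn t (Set.Iic n))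
    (hk : k ∈ Set.Icc 1 n) : 0 ≤ L1coeff ν t n k := by
  have hstep := sub_one_lt_of_strictMonoOn ht hk
  have hkn : t k ≤ t n := ht.monotoneOn hk.2 Set.self_mem_Iic hk.2
  refine le_trans ?_ (le_L1coeff hν0 hν1 hstep hkn)
  exact div_nonneg (Real.rpow_nonneg (by linarith) _) (Real.Gamma_pos_of_pos (by linarith)).le

theorem L1coeff_monotoneOn (hν0 : 0 ≤ ν) (hν1 : ν < 1) (ht : StrictMonoOn t (Set.Iic n)) :
    MonotoneOn (L1coeff ν t n) (Set.Icc 1 n) := by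
  refine monotoneOn_of_le_add_one Set.ordConnected_Icc fun k _ hk hk' => ?_
  have hkn : t k < t n := ht hk.2 Set.self_mem_Iic hk'.2
  calc L1coeff ν t n k ≤ (t n - t k) ^ (-ν) / Real.Gamma (1 - ν) :=
        L1coeff_le hν0 hν1 (sub_one_lt_of_strictMonoOn ht hk) hkn
    _ ≤ L1coeff ν t n (k + 1) :=
        le_L1coeff (k := k + 1) hν0 hν1 (sub_one_lt_of_strictMonoOn ht hk')
          (ht.monotoneOn hk'.2 Set.self_mem_Iic hk'.2)

end L1coeff

theorem L1_coercivity_general {H : Type*} [NormedAddCommGroup H] [InnerProductSpace ℝ H]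
    (ν : ℝ) (hν : ν ∈ Set.Ioo (0 : ℝ) 1) (N : ℕ)
    (t : ℕ → ℝ)
    (hmono : ∀ k < N, t k < t (k + 1))
    (V : ℕ → H) (n : ℕ) (hnN : n ≤ N) :
    (1 / 2) * ∑ k ∈ Finset.Icc 1 n, L1coeff ν t n k * (‖V k‖ ^ 2 - ‖V (k - 1)‖ ^ 2)
      ≤ ⟪∑ k ∈ Finset.Icc 1 n, L1coeff ν t n k • (V k - V (k - 1)), V n⟫ := by
  have ht : StrictMonoOn t (Set.Iic n) :=
    strictMonoOn_of_lt_add_one Set.ordConnected_Iic fun k _ _ hk => hmono k (hk.trans hnN)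
  exact half_sum_mul_sub_norm_sq_le_inner_sum_smul
    (fun k hk => L1coeff_nonneg hν.1.le hν.2 ht hk) (L1coeff_monotoneOn hν.1.le hν.2 ht) V

/-- Discrete coercivity of the L1 formula (Liao–McLean–Zhang):
`⟨∑_{k=1}^n A^{(n)}_{n-k}(V^k - V^{k-1}), V^n⟩ ≥ (1/2) ∑_{k=1}^n A^{(n)}_{n-k}(‖V^k‖² - ‖V^{k-1}‖²)`. -/
theorem L1_coercivity {H : Type*} [NormedAddCommGroup H] [InnerProductSpace ℝ H]
    (ν T : ℝ) (hν : ν ∈ Set.Ioo (0 : ℝ) 1) (N : ℕ) (hN : 0 < N)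
    (t : ℕ → ℝ) (ht0 : t 0 = 0) (htN : t N = T)
    (hmono : ∀ k < N, t k < t (k + 1))
    (V : ℕ → H) (n : ℕ) (h1n : 1 ≤ n) (hnN : n ≤ N) :
    (1 / 2) * ∑ k ∈ Finset.Icc 1 n, L1coeff ν t n k * (‖V k‖ ^ 2 - ‖V (k - 1)‖ ^ 2)
      ≤ ⟪∑ k ∈ Finset.Icc 1 n, L1coeff ν t n k • (V k - V (k - 1)), V n⟫ :=
  L1_coercivity_general ν hν N t hmono V n hnN
end

section
/- Let ν ∈ (0,1). There exists a constant C > 0 depending only on ν such that for all real numbers b, t with 0 < b < t, one has ∫_0^b s^{−ν}(t−s)^{−ν−1} ds ≤ C t^{−ν}(t−b)^{−ν}. -/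
open MeasureTheory intervalIntegral Real

section aux
variable {ν : ℝ}

lemma sk_meas (ν t : ℝ) : Measurable (fun s : ℝ => s ^ (-ν) * (t - s) ^ (-ν - 1)) := by
  fun_prop

/-- integrability of the kernel on `[0,m]` when `m ≤ t/2`. -/
lemma sk_int1 (hν0 : 0 < ν) (hν1 : ν < 1) {m t : ℝ} (hm : 0 < m) (hmt : m ≤ t / 2)
    (ht : 0 < t) :
    IntervalIntegrable (fun s : ℝ => s ^ (-ν) * (t - s) ^ (-ν - 1)) volume 0 m := by
  have hg : IntervalIntegrable (fun s : ℝ => (t/2) ^ (-ν-1) * s ^ (-ν)) volume 0 m :=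
    (intervalIntegral.intervalIntegrable_rpow' (by linarith)).const_mul _
  refine hg.mono_fun' ((sk_meas ν t).aestronglyMeasurable) ?_
  have h : ∀ s ∈ Set.uIoc (0:ℝ) m,
      ‖s ^ (-ν) * (t - s) ^ (-ν - 1)‖ ≤ (t/2) ^ (-ν-1) * s ^ (-ν) := by
    intro s hs
    rw [Set.uIoc_of_le hm.le] at hs
    have hs0 : 0 < s := hs.1
    have hst : t / 2 ≤ t - s := by linarith [hs.2]
    have h1 : (t - s) ^ (-ν - 1) ≤ (t/2) ^ (-ν-1) :=
      Real.rpow_le_rpow_of_nonpos (by linarith) hst (by linarith)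
    have hnn : 0 ≤ s ^ (-ν) * (t - s) ^ (-ν - 1) :=
      mul_nonneg (Real.rpow_nonneg hs0.le _) (Real.rpow_nonneg (by linarith) _)
    rw [Real.norm_eq_abs, abs_of_nonneg hnn, mul_comm ((t/2) ^ (-ν-1))]
    exact mul_le_mul_of_nonneg_left h1 (Real.rpow_nonneg hs0.le _)
  exact (ae_restrict_iff' measurableSet_uIoc).2 (Filter.Eventually.of_forall h)

/-- bound for the first piece. -/
lemma sk_bound1 (hν0 : 0 < ν) (hν1 : ν < 1) {m t : ℝ} (hm : 0 < m) (hmt : m ≤ t / 2)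
    (ht : 0 < t) :
    (∫ s in (0:ℝ)..m, s ^ (-ν) * (t - s) ^ (-ν - 1)) ≤ (4 / (1 - ν)) * t ^ (-2*ν) := by
  have ht2 : 0 < t / 2 := by linarith
  have h1ν : (0:ℝ) < 1 - ν := by linarith
  have hg : IntervalIntegrable (fun s : ℝ => (t/2) ^ (-ν-1) * s ^ (-ν)) volume 0 m :=
    (intervalIntegral.intervalIntegrable_rpow' (by linarith)).const_mul _
  have h1 : (∫ s in (0:ℝ)..m, s ^ (-ν) * (t - s) ^ (-ν - 1))
      ≤ ∫ s in (0:ℝ)..m, (t/2) ^ (-ν-1) * s ^ (-ν) := by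
    refine intervalIntegral.integral_mono_on hm.le (sk_int1 hν0 hν1 hm hmt ht) hg ?_
    intro s hs
    rcases eq_or_lt_of_le hs.1 with h0 | h0
    · simp [← h0, Real.zero_rpow (neg_ne_zero.2 hν0.ne')]
    · have hst : t / 2 ≤ t - s := by linarith [hs.2]
      have hle := Real.rpow_le_rpow_of_nonpos ht2 hst (by linarith : -ν - 1 ≤ 0)
      calc s ^ (-ν) * (t - s) ^ (-ν - 1) ≤ s ^ (-ν) * (t/2) ^ (-ν-1) :=
            mul_le_mul_of_nonneg_left hle (Real.rpow_nonneg h0.le _)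
        _ = (t/2) ^ (-ν-1) * s ^ (-ν) := mul_comm _ _
  have h2 : (∫ s in (0:ℝ)..m, (t/2) ^ (-ν-1) * s ^ (-ν))
      = (t/2) ^ (-ν-1) * (m ^ (1 - ν) / (1 - ν)) := by
    rw [intervalIntegral.integral_const_mul, integral_rpow (Or.inl (by linarith))]
    rw [Real.zero_rpow (by linarith : -ν + 1 ≠ 0)]
    ring_nf
  have h3 : m ^ (1 - ν) ≤ (t/2) ^ (1 - ν) :=
    Real.rpow_le_rpow hm.le hmt (by linarith)
  have h4 : (t/2) ^ (-ν-1) * ((t/2) ^ (1 - ν)) = (t/2) ^ (-2*ν) := by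
    rw [← Real.rpow_add ht2]; ring_nf
  have e2 : (2:ℝ) ^ (-2*ν) = ((2:ℝ) ^ (2*ν))⁻¹ := by
    rw [show (-2*ν) = -(2*ν) by ring]; exact Real.rpow_neg (by norm_num) _
  have h5 : (t/2) ^ (-2*ν) = 2 ^ (2*ν) * t ^ (-2*ν) := by
    rw [Real.div_rpow ht.le (by norm_num), e2, div_inv_eq_mul, mul_comm]
  have h6 : (2:ℝ) ^ (2*ν) ≤ 4 := by
    calc (2:ℝ) ^ (2*ν) ≤ 2 ^ (2:ℝ) := Real.rpow_le_rpow_of_exponent_le one_le_two (by linarith)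
      _ = 4 := by
          rw [show (2:ℝ) = ((2:ℕ):ℝ) from rfl, Real.rpow_natCast]; norm_num
  have htpos : 0 < t ^ (-2*ν) := Real.rpow_pos_of_pos ht _
  have hb : (t/2) ^ (-ν-1) * m ^ (1 - ν) ≤ 4 * t ^ (-2*ν) := by
    calc (t/2) ^ (-ν-1) * m ^ (1 - ν) ≤ (t/2) ^ (-ν-1) * (t/2) ^ (1 - ν) :=
          mul_le_mul_of_nonneg_left h3 (Real.rpow_nonneg ht2.le _)
      _ = (t/2) ^ (-2*ν) := h4
      _ = 2 ^ (2*ν) * t ^ (-2*ν) := h5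
      _ ≤ 4 * t ^ (-2*ν) := mul_le_mul_of_nonneg_right h6 htpos.le
  have h4' : (t/2) ^ (-ν-1) * (m ^ (1 - ν) / (1 - ν)) ≤ (4 / (1 - ν)) * t ^ (-2*ν) := by
    rw [mul_div_assoc', div_mul_eq_mul_div]
    gcongr
  exact h1.trans (h2 ▸ h4')

/-- continuity-based integrability on `[t/2, b]`. -/
lemma sk_int2 (ν : ℝ) {b t : ℝ} (ht : 0 < t) (htb : t/2 < b) (hbt : b < t) :
    IntervalIntegrable (fun s : ℝ => s ^ (-ν) * (t - s) ^ (-ν - 1)) volume (t/2) b := by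
  apply ContinuousOn.intervalIntegrable
  rw [Set.uIcc_of_le htb.le]
  intro s hs
  have hs0 : 0 < s := lt_of_lt_of_le (by linarith) hs.1
  have hst : s < t := lt_of_le_of_lt hs.2 hbt
  have c1 : ContinuousWithinAt (fun s : ℝ => s ^ (-ν)) (Set.Icc (t/2) b) s :=
    (Real.continuousAt_rpow_const s (-ν) (Or.inl hs0.ne')).continuousWithinAt
  have c2 : ContinuousWithinAt (fun s : ℝ => (t - s) ^ (-ν - 1)) (Set.Icc (t/2) b) s := by
    have : ContinuousAt (fun s : ℝ => (t - s) ^ (-ν - 1)) s :=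
      ContinuousAt.rpow_const (continuous_const.sub continuous_id).continuousAt
        (Or.inl (sub_ne_zero.2 hst.ne'))
    exact this.continuousWithinAt
  exact c1.mul c2

lemma sk_bound2 (hν0 : 0 < ν) (hν1 : ν < 1) {b t : ℝ} (ht : 0 < t) (htb : t/2 < b)
    (hbt : b < t) :
    (∫ s in (t/2)..b, s ^ (-ν) * (t - s) ^ (-ν - 1))
      ≤ (2/ν) * t ^ (-ν) * (t - b) ^ (-ν) := by
  have ht2 : 0 < t / 2 := by linarith
  have htb0 : 0 < t - b := by linarith
  have hg : IntervalIntegrable (fun s : ℝ => (t/2) ^ (-ν) * (t - s) ^ (-ν - 1))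
      volume (t/2) b := by
    apply ContinuousOn.intervalIntegrable
    rw [Set.uIcc_of_le htb.le]
    intro s hs
    have hst : s < t := lt_of_le_of_lt hs.2 hbt
    exact continuousWithinAt_const.mul
      (((continuous_const.sub continuous_id).continuousAt.rpow_const
        (Or.inl (sub_ne_zero.2 hst.ne'))).continuousWithinAt)
  have hmono : (∫ s in (t/2)..b, s ^ (-ν) * (t - s) ^ (-ν - 1))
      ≤ ∫ s in (t/2)..b, (t/2) ^ (-ν) * (t - s) ^ (-ν - 1) := by
    refine intervalIntegral.integral_mono_on htb.le (sk_int2 ν ht htb hbt) hg ?_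
    intro s hs
    have h1 : s ^ (-ν) ≤ (t/2) ^ (-ν) :=
      Real.rpow_le_rpow_of_nonpos ht2 hs.1 (by linarith)
    exact mul_le_mul_of_nonneg_right h1 (Real.rpow_nonneg (by linarith [hs.2]) _)
  have hIone : (∫ s in (t/2)..b, (t - s) ^ (-ν - 1))
      = ((t - t/2) ^ (-ν) - (t - b) ^ (-ν)) / (-ν) := by
    rw [intervalIntegral.integral_comp_sub_left (fun x => x ^ (-ν - 1)) t,
      integral_rpow (Or.inr ⟨by intro h; apply hν0.ne'; linarith,
        Set.notMem_uIcc_of_lt htb0 (by linarith)⟩)]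
    norm_num
  have hIle : (∫ s in (t/2)..b, (t - s) ^ (-ν - 1)) ≤ (t - b) ^ (-ν) / ν := by
    rw [hIone, div_neg, ← neg_div, neg_sub, sub_div]
    have : (0:ℝ) ≤ (t - t/2) ^ (-ν) / ν :=
      div_nonneg (Real.rpow_nonneg (by linarith) _) hν0.le
    linarith
  have hhalf : (t/2:ℝ) ^ (-ν) ≤ 2 * t ^ (-ν) := by
    have e2 : (2:ℝ) ^ (-ν) = ((2:ℝ) ^ ν)⁻¹ := Real.rpow_neg (by norm_num) ν
    rw [Real.div_rpow ht.le (by norm_num), e2, div_inv_eq_mul]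
    have h2 : (2:ℝ) ^ ν ≤ 2 := by
      calc (2:ℝ) ^ ν ≤ 2 ^ (1:ℝ) := Real.rpow_le_rpow_of_exponent_le one_le_two hν1.le
        _ = 2 := Real.rpow_one 2
    have := Real.rpow_nonneg ht.le (-ν)
    nlinarith
  calc (∫ s in (t/2)..b, s ^ (-ν) * (t - s) ^ (-ν - 1))
      ≤ ∫ s in (t/2)..b, (t/2) ^ (-ν) * (t - s) ^ (-ν - 1) := hmono
    _ = (t/2) ^ (-ν) * ∫ s in (t/2)..b, (t - s) ^ (-ν - 1) :=
        intervalIntegral.integral_const_mul _ _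
    _ ≤ (t/2) ^ (-ν) * ((t - b) ^ (-ν) / ν) :=
        mul_le_mul_of_nonneg_left hIle (Real.rpow_nonneg ht2.le _)
    _ ≤ (2 * t ^ (-ν)) * ((t - b) ^ (-ν) / ν) :=
        mul_le_mul_of_nonneg_right hhalf
          (div_nonneg (Real.rpow_nonneg htb0.le _) hν0.le)
    _ = (2/ν) * t ^ (-ν) * (t - b) ^ (-ν) := by ring

end aux

open MeasureTheory

/-- Weakly singular kernel estimate: for `ν ∈ (0,1)` there is `C = C(ν) > 0` with
`∫₀ᵇ s^{-ν}(t-s)^{-ν-1} ds ≤ C t^{-ν}(t-b)^{-ν}` for all `0 < b < t`. -/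
theorem singular_kernel_integral_bound (ν : ℝ) (hν : ν ∈ Set.Ioo (0 : ℝ) 1) :
    ∃ C > 0, ∀ b t : ℝ, 0 < b → b < t →
      (∫ s in (0 : ℝ)..b, s ^ (-ν) * (t - s) ^ (-ν - 1))
        ≤ C * t ^ (-ν) * (t - b) ^ (-ν) := by
  obtain ⟨hν0, hν1⟩ := hν
  have h1ν : (0:ℝ) < 1 - ν := by linarith
  refine ⟨4 / (1 - ν) + 2 / ν, by positivity, ?_⟩
  intro b t hb hbt
  have ht : 0 < t := hb.trans hbt
  have htb0 : 0 < t - b := by linarith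
  have hX : 0 < t ^ (-ν) * (t - b) ^ (-ν) :=
    mul_pos (Real.rpow_pos_of_pos ht _) (Real.rpow_pos_of_pos htb0 _)
  have hkey : t ^ (-2*ν) ≤ t ^ (-ν) * (t - b) ^ (-ν) := by
    have e : t ^ (-2*ν) = t ^ (-ν) * t ^ (-ν) := by
      rw [← Real.rpow_add ht]; ring_nf
    rw [e]
    exact mul_le_mul_of_nonneg_left
      (Real.rpow_le_rpow_of_nonpos htb0 (by linarith) (by linarith))
      (Real.rpow_nonneg ht.le _)
  rcases le_or_gt b (t/2) with hcase | hcase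
  · have h1 := sk_bound1 hν0 hν1 hb hcase ht
    have h2 : (4 / (1 - ν)) * t ^ (-2*ν) ≤ (4 / (1 - ν)) * (t ^ (-ν) * (t - b) ^ (-ν)) :=
      mul_le_mul_of_nonneg_left hkey (by positivity)
    have h3 : (0:ℝ) ≤ (2/ν) * (t ^ (-ν) * (t - b) ^ (-ν)) := by positivity
    calc (∫ s in (0 : ℝ)..b, s ^ (-ν) * (t - s) ^ (-ν - 1))
        ≤ (4 / (1 - ν)) * t ^ (-2*ν) := h1
      _ ≤ (4 / (1 - ν)) * (t ^ (-ν) * (t - b) ^ (-ν)) := h2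
      _ ≤ (4 / (1 - ν) + 2 / ν) * t ^ (-ν) * (t - b) ^ (-ν) := by nlinarith
  · have ht2 : 0 < t / 2 := by linarith
    have hsplit : (∫ s in (0:ℝ)..(t/2), s ^ (-ν) * (t - s) ^ (-ν - 1))
          + (∫ s in (t/2)..b, s ^ (-ν) * (t - s) ^ (-ν - 1))
        = ∫ s in (0 : ℝ)..b, s ^ (-ν) * (t - s) ^ (-ν - 1) :=
      intervalIntegral.integral_add_adjacent_intervals
        (sk_int1 hν0 hν1 ht2 le_rfl ht) (sk_int2 ν ht hcase hbt)
    have h1 := sk_bound1 hν0 hν1 ht2 le_rfl ht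
    have h2 := sk_bound2 hν0 hν1 ht hcase hbt
    have h1' : (∫ s in (0:ℝ)..(t/2), s ^ (-ν) * (t - s) ^ (-ν - 1))
        ≤ (4 / (1 - ν)) * (t ^ (-ν) * (t - b) ^ (-ν)) :=
      h1.trans (mul_le_mul_of_nonneg_left hkey (by positivity))
    rw [← hsplit]
    calc _ ≤ (4 / (1 - ν)) * (t ^ (-ν) * (t - b) ^ (-ν))
          + (2/ν) * t ^ (-ν) * (t - b) ^ (-ν) := add_le_add h1' h2
      _ = (4 / (1 - ν) + 2 / ν) * t ^ (-ν) * (t - b) ^ (-ν) := by ring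
end

section
/- Let α > 0 and λ ≥ 0. Then for every t > 0, the function t ↦ t E_{α,1}(−λ t^α) is differentiable at t and d/dt [t E_{α,1}(−λ t^α)] = E_{α,1}(−λ t^α) + E_{α,0}(−λ t^α), where E_{α,0}(z) = ∑_{k=1}^∞ z^k/Γ(kα). -/
/-- The two-parameter Mittag-Leffler function (real arguments)
`E_{α,β}(z) = ∑_{k=0}^∞ z^k/Γ(αk+β)`. -/
noncomputable def mlReal (α β z : ℝ) : ℝ :=
  ∑' k : ℕ, z ^ k / Real.Gamma (α * k + β)

/-- `E_{α,0}(z) = ∑_{k=1}^∞ z^k/Γ(kα)`. -/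
noncomputable def mlZero (α z : ℝ) : ℝ :=
  ∑' k : ℕ, z ^ (k + 1) / Real.Gamma (((k : ℝ) + 1) * α)

/-! With `z = -λ t^α` we have `t · dz/dt = α z`, so the chain and product rules give
`d/dt [t E_{α,1}(z)] = E_{α,1}(z) + α z E'_{α,1}(z)`, and termwise
`α z E'_{α,1}(z) = ∑_{k ≥ 1} α k z^k / Γ(αk + 1) = ∑_{k ≥ 1} z^k / Γ(αk)` by `Γ(x + 1) = x Γ(x)`.
Termwise differentiation is legitimate because `E_{α,β}` is entire: by the ratio test this reduces
to `Γ(x + α) / Γ(x) → ∞`, which follows from Gautschi's inequality `Γ(x) (x + a - 1)^a ≤ Γ(x + a)`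
for `0 < a ≤ 1`, a consequence of the log-convexity of `Γ`. -/

open Real Filter Set

namespace Real

theorem Gamma_mul_rpow_le_Gamma_add {a x : ℝ} (ha₀ : 0 < a) (ha₁ : a ≤ 1) (hx : 1 - a < x) :
    Gamma x * (x + a - 1) ^ a ≤ Gamma (x + a) := by
  set u := x + a - 1 with hu_def
  have hu : 0 < u := by linarith
  have hΓu := Gamma_pos_of_pos hu
  have hrec : Gamma (x + a) = u * Gamma u := by rw [← Gamma_add_one hu.ne', hu_def, sub_add_cancel]
  have hconv := convexOn_log_Gamma.2 (mem_Ioi.2 hu) (mem_Ioi.2 (by linarith : 0 < x + a))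
    ha₀.le (sub_nonneg.2 ha₁) (by ring)
  simp only [Function.comp_apply, smul_eq_mul,
    show a * u + (1 - a) * (x + a) = x by ring, hrec, log_mul hu.ne' hΓu.ne'] at hconv
  have hlog : log (Gamma x) + a * log u ≤ log (Gamma (x + a)) := by
    rw [hrec, log_mul hu.ne' hΓu.ne']; linarith
  calc Gamma x * u ^ a = exp (log (Gamma x) + a * log u) := by
        rw [exp_add, exp_log (Gamma_pos_of_pos (by linarith)), rpow_def_of_pos hu, mul_comm a]
    _ ≤ Gamma (x + a) := by
        rw [← exp_log (Gamma_pos_of_pos (by linarith : 0 < x + a))]; exact exp_le_exp.2 hlog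

theorem tendsto_Gamma_add_div_Gamma_atTop {α : ℝ} (hα : 0 < α) :
    Tendsto (fun x => Gamma (x + α) / Gamma x) atTop atTop := by
  set a := min α 1
  have ha₀ : 0 < a := lt_min hα one_pos
  refine tendsto_atTop_mono' _ ?_
    ((tendsto_rpow_atTop ha₀).comp (tendsto_atTop_add_const_right _ (a - 1) tendsto_id))
  filter_upwards [eventually_ge_atTop 2] with x hx
  have hΓx := Gamma_pos_of_pos (by linarith : 0 < x)
  rw [Function.comp_apply, id, le_div_iff₀ hΓx, mul_comm, ← add_sub_assoc]
  calc Gamma x * (x + a - 1) ^ a ≤ Gamma (x + a) :=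
        Gamma_mul_rpow_le_Gamma_add ha₀ (min_le_right _ _) (by linarith)
    _ ≤ Gamma (x + α) := Gamma_strictMonoOn_Ici.monotoneOn (mem_Ici.2 (by linarith))
        (mem_Ici.2 (by linarith)) (by linarith [min_le_left α 1])

end Real

theorem summable_pow_div_Gamma {α : ℝ} (hα : 0 < α) (β z : ℝ) :
    Summable fun k : ℕ => z ^ k / Gamma (α * k + β) := by
  have hx : Tendsto (fun k : ℕ => α * k + β) atTop atTop :=
    tendsto_atTop_add_const_right _ _ (tendsto_natCast_atTop_atTop.const_mul_atTop hα)
  refine summable_of_ratio_norm_eventually_le (r := 1 / 2) (by norm_num) ?_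
  filter_upwards [hx.eventually_gt_atTop 0,
    hx.eventually ((tendsto_Gamma_add_div_Gamma_atTop hα).eventually_ge_atTop (2 * |z|))]
    with k hpos hratio
  have hΓ := Gamma_pos_of_pos hpos
  have hΓ' := Gamma_pos_of_pos (by linarith : 0 < α * k + β + α)
  rw [le_div_iff₀ hΓ] at hratio
  rw [Nat.cast_succ, show α * (k + 1 : ℝ) + β = α * k + β + α by ring]
  simp only [norm_div, norm_pow, Real.norm_eq_abs, abs_of_pos hΓ, abs_of_pos hΓ']
  rw [div_le_iff₀ hΓ', pow_succ]
  calc |z| ^ k * |z| = 1 / 2 * (|z| ^ k / Gamma (α * k + β)) * (2 * |z| * Gamma (α * k + β)) := by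
        field_simp
    _ ≤ 1 / 2 * (|z| ^ k / Gamma (α * k + β)) * Gamma (α * k + β + α) := by gcongr

theorem hasDerivAt_tsum_mul_pow {c : ℕ → ℝ} (hc : ∀ r, Summable fun k => c k * r ^ k) (z : ℝ) :
    HasDerivAt (fun x => ∑' k, c k * x ^ k) (∑' k, (k + 1) * c (k + 1) * z ^ k) z := by
  set R := |z| + 1
  have hR : 1 ≤ R := by simp [R]
  have hbound : ∀ (k : ℕ) (x : ℝ), x ∈ Metric.ball 0 R →
      ‖c k * (k * x ^ (k - 1))‖ ≤ |c k * (2 * R) ^ k| := by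
    intro k x hx
    rw [mem_ball_zero_iff, Real.norm_eq_abs] at hx
    have hk : (k : ℝ) ≤ 2 ^ k := by exact_mod_cast (Nat.lt_two_pow_self).le
    calc ‖c k * (k * x ^ (k - 1))‖ = |c k| * (k * |x| ^ (k - 1)) := by simp
      _ ≤ |c k| * (2 ^ k * R ^ k) := by
          gcongr
          calc |x| ^ (k - 1) ≤ R ^ (k - 1) := by gcongr
            _ ≤ R ^ k := pow_le_pow_right₀ hR (Nat.sub_le k 1)
      _ = |c k * (2 * R) ^ k| := by
          rw [abs_mul, abs_of_pos (by positivity : (0 : ℝ) < (2 * R) ^ k), mul_pow]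
  have hz : z ∈ Metric.ball 0 R := by simp [R]
  have hderiv := hasDerivAt_tsum_of_isPreconnected (hc (2 * R)).abs Metric.isOpen_ball
    (convex_ball 0 R).isPreconnected (fun k x _ => (hasDerivAt_pow k x).const_mul (c k)) hbound
    (Metric.mem_ball_self (by linarith)) (hc 0) hz
  have hsum : Summable fun k => c k * (k * z ^ (k - 1)) :=
    .of_norm_bounded (hc (2 * R)).abs fun k => hbound k z hz
  rw [hsum.tsum_eq_zero_add] at hderiv
  refine hderiv.congr_deriv ?_
  rw [Nat.cast_zero, zero_mul, mul_zero, zero_add]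
  exact tsum_congr fun k => by rw [Nat.cast_succ, add_tsub_cancel_right]; ring

noncomputable def mlRealDeriv (α β z : ℝ) : ℝ :=
  ∑' k : ℕ, ((k : ℝ) + 1) * (Gamma (α * (k + 1 : ℕ) + β))⁻¹ * z ^ k

theorem hasDerivAt_mlReal {α : ℝ} (hα : 0 < α) (β z : ℝ) :
    HasDerivAt (mlReal α β) (mlRealDeriv α β z) z := by
  have h := hasDerivAt_tsum_mul_pow (c := fun k : ℕ => (Gamma (α * k + β))⁻¹)
    (fun r => by simpa only [div_eq_inv_mul] using summable_pow_div_Gamma hα β r) z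
  convert h using 1
  · ext x
    simp only [mlReal, div_eq_inv_mul]
  · simp [mlRealDeriv]

theorem mul_mul_mlRealDeriv_one {α : ℝ} (hα : α ≠ 0) (z : ℝ) :
    α * z * mlRealDeriv α 1 z = mlZero α z := by
  rw [mlRealDeriv, mlZero, ← tsum_mul_left]
  refine tsum_congr fun k => ?_
  have hk : ((k : ℝ) + 1) * α ≠ 0 := mul_ne_zero k.cast_add_one_ne_zero hα
  rw [Nat.cast_succ, mul_comm α ((k : ℝ) + 1), Gamma_add_one hk]
  field_simp
  ring

theorem hasDerivAt_t_mul_mittagLeffler_general (α lam : ℝ) (hα : 0 < α)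
    (t : ℝ) (ht : 0 < t) :
    HasDerivAt (fun s : ℝ => s * mlReal α 1 (-lam * s ^ α))
      (mlReal α 1 (-lam * t ^ α) + mlZero α (-lam * t ^ α)) t := by
  have hz : HasDerivAt (fun s : ℝ => -lam * s ^ α) (-lam * (α * t ^ (α - 1))) t :=
    (hasDerivAt_rpow_const (Or.inl ht.ne')).const_mul _
  refine ((hasDerivAt_id t).mul ((hasDerivAt_mlReal hα 1 _).comp t hz)).congr_deriv ?_
  rw [← mul_mul_mlRealDeriv_one hα.ne', rpow_sub_one ht.ne']
  simp only [id, Function.comp_apply]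
  field_simp

/-- For `α > 0`, `λ ≥ 0` and `t > 0`,
`d/dt [t E_{α,1}(-λ t^α)] = E_{α,1}(-λ t^α) + E_{α,0}(-λ t^α)`. -/
theorem hasDerivAt_t_mul_mittagLeffler (α lam : ℝ) (hα : 0 < α) (hlam : 0 ≤ lam)
    (t : ℝ) (ht : 0 < t) :
    HasDerivAt (fun s : ℝ => s * mlReal α 1 (-lam * s ^ α))
      (mlReal α 1 (-lam * t ^ α) + mlZero α (-lam * t ^ α)) t :=
  hasDerivAt_t_mul_mittagLeffler_general α lam hα t ht
end

section
/- Let α > 0 and λ ≥ 0. Then for every t > 0, the function t ↦ E_{α,1}(−λ t^α) is differentiable at t and d/dt [E_{α,1}(−λ t^α)] = t^{−1} E_{α,0}(−λ t^α), where E_{α,0}(z) = ∑_{k=1}^∞ z^k/Γ(kα). -/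
open Real Filter Set

namespace Real

theorem inv_Gamma_eq_div_Gamma_add_one (x : ℝ) : (Gamma x)⁻¹ = x / Gamma (x + 1) := by
  rcases eq_or_ne x 0 with rfl | hx
  · simp
  · rw [Gamma_add_one hx, div_mul_cancel_left₀ hx]

theorem rpow_le_Gamma_add_div_Gamma {x a : ℝ} (hx : 1 < x) (ha : 0 < a) :
    (x - 1) ^ a ≤ Gamma (x + a) / Gamma x := by
  have hΓ : 0 < Gamma x := Gamma_pos_of_pos (by linarith)
  have hΓa : 0 < Gamma (x + a) := Gamma_pos_of_pos (by linarith)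
  have hslope := convexOn_log_Gamma.slope_mono_adjacent (x := x - 1) (y := x) (z := x + a)
    (by simp; linarith) (by simp; linarith) (by linarith) (by linarith)
  have hrec : log (Gamma x) - log (Gamma (x - 1)) = log (x - 1) := by
    have := Gamma_add_one (s := x - 1) (by linarith)
    rw [sub_add_cancel] at this
    rw [this, log_mul (by linarith) (Gamma_pos_of_pos (by linarith)).ne', add_sub_cancel_right]
  simp only [Function.comp_apply, sub_sub_cancel, div_one, add_sub_cancel_left, hrec,
    le_div_iff₀ ha] at hslope
  rw [← log_le_log_iff (by positivity) (div_pos hΓa hΓ), log_rpow (by linarith),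
    log_div hΓa.ne' hΓ.ne']
  linarith

end Real

theorem mlReal_zero_eq_mlZero {α : ℝ} (hα : 0 < α) (z : ℝ) :
    mlReal α 0 z = mlZero α z := by
  rw [mlReal, (summable_pow_div_Gamma hα 0 z).tsum_eq_zero_add, mlZero]
  simp [mul_comm α]

theorem hasDerivAt_mul_rpow_pow_div_Gamma (α c : ℝ) (k : ℕ) {s : ℝ} (hs : 0 < s) :
    HasDerivAt (fun s => (c * s ^ α) ^ k / Gamma (α * k + 1))
      (s⁻¹ * ((c * s ^ α) ^ k / Gamma (α * k))) s := by
  have h := (((hasDerivAt_rpow_const (p := α) (Or.inl hs.ne')).const_mul c).fun_pow k).div_const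
    (Gamma (α * k + 1))
  refine h.congr_deriv ?_
  rw [div_eq_mul_inv _ (Gamma (α * k)), inv_Gamma_eq_div_Gamma_add_one, rpow_sub_one hs.ne']
  rcases k with _ | k
  · simp
  · simp only [Nat.add_sub_cancel, pow_succ]
    push_cast
    field_simp

theorem hasDerivAt_mlReal_one_mul_rpow {α : ℝ} (hα : 0 < α) (c : ℝ) {t : ℝ} (ht : 0 < t) :
    HasDerivAt (fun s => mlReal α 1 (c * s ^ α)) (t⁻¹ * mlZero α (c * t ^ α)) t := by
  set A := |c| * (2 * t) ^ α
  have htS : t ∈ Ioo (t / 2) (2 * t) := ⟨by linarith, by linarith⟩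
  have hbound : ∀ (k : ℕ), ∀ s ∈ Ioo (t / 2) (2 * t),
      ‖s⁻¹ * ((c * s ^ α) ^ k / Gamma (α * k))‖ ≤ 2 / t * |A ^ k / Gamma (α * k)| := by
    rintro k s ⟨hs, hs'⟩
    have hs0 : 0 < s := by linarith
    have hbase : |c * s ^ α| ≤ A := by
      rw [abs_mul, abs_of_pos (rpow_pos_of_pos hs0 α)]
      exact mul_le_mul_of_nonneg_left (rpow_le_rpow hs0.le hs'.le hα.le) (abs_nonneg c)
    rw [norm_mul, norm_div, norm_pow, norm_inv, Real.norm_of_nonneg hs0.le, abs_div, abs_pow,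
      abs_of_nonneg (by positivity : 0 ≤ A), Real.norm_eq_abs, Real.norm_eq_abs]
    gcongr
    rw [inv_le_comm₀ hs0 (by positivity), inv_div]
    exact hs.le
  have hderiv : HasDerivAt (fun s => mlReal α 1 (c * s ^ α))
      (∑' k : ℕ, t⁻¹ * ((c * t ^ α) ^ k / Gamma (α * k))) t :=
    hasDerivAt_tsum_of_isPreconnected
      ((summable_pow_div_Gamma hα 0 A).abs.mul_left (2 / t)) isOpen_Ioo isPreconnected_Ioo
      (fun k s hs => hasDerivAt_mul_rpow_pow_div_Gamma α c k (by linarith [hs.1] : 0 < s))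
      (by simpa only [add_zero] using hbound) htS (summable_pow_div_Gamma hα 1 (c * t ^ α)) htS
  rw [← mlReal_zero_eq_mlZero hα, mlReal, ← tsum_mul_left]
  simpa only [add_zero] using hderiv

theorem hasDerivAt_mittagLeffler_general (α lam : ℝ) (hα : 0 < α)
    (t : ℝ) (ht : 0 < t) :
    HasDerivAt (fun s : ℝ => mlReal α 1 (-lam * s ^ α))
      (t⁻¹ * mlZero α (-lam * t ^ α)) t :=
  hasDerivAt_mlReal_one_mul_rpow hα (-lam) ht

/-- For `α > 0`, `λ ≥ 0` and `t > 0`,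
`d/dt [E_{α,1}(-λ t^α)] = t⁻¹ E_{α,0}(-λ t^α)`. -/
theorem hasDerivAt_mittagLeffler (α lam : ℝ) (hα : 0 < α) (hlam : 0 ≤ lam)
    (t : ℝ) (ht : 0 < t) :
    HasDerivAt (fun s : ℝ => mlReal α 1 (-lam * s ^ α))
      (t⁻¹ * mlZero α (-lam * t ^ α)) t :=
  hasDerivAt_mittagLeffler_general α lam hα t ht
end
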